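/- For every element x of Q: x^a = x^{dad} = x^{d̄ a d̄} = x^{de} = x^{e d̄}. -/

import Mathlib

/-- A quandle as in the paper: a set with operations `▷` and `▷⁻¹` satisfying
axioms A1, A2, A3. -/
class PaperQuandle (Q : Type*) where
  rhd : Q → Q → Q
  rhdInv : Q → Q → Q
  fix : ∀ x : Q, rhd x x = x
  inv_rhd : ∀ x y : Q, rhdInv (rhd x y) y = x
  rhd_inv : ∀ x y : Q, rhd (rhdInv x y) y = x
  self_distrib : ∀ x y z : Q, rhd (rhd x y) z = rhd (rhd x z) (rhd y z)

infixl:65 " ▷ " => PaperQuandle.rhd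
infixl:65 " ▷⁻¹ " => PaperQuandle.rhdInv

/-- The point symmetry at `u`, as a permutation of `Q`: `x ↦ x ▷ u`,
with inverse `x ↦ x ▷⁻¹ u`. -/
def ptSym {Q : Type*} [PaperQuandle Q] (u : Q) : Equiv.Perm Q where
  toFun x := x ▷ u
  invFun x := x ▷⁻¹ u
  left_inv x := PaperQuandle.inv_rhd x u
  right_inv x := PaperQuandle.rhd_inv x u

theorem eq_conj_and_eq_mul_of_mul_mul_eq_one {G : Type*} [Group G] {a d e : G}
    (ha : a * a = 1) (he : e * e = 1) (hd : a * e * d = 1) :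
    a = d * a * d ∧ a = d⁻¹ * a * d⁻¹ ∧ a = e * d ∧ a = d⁻¹ * e := by
  have ha' : a⁻¹ = a := inv_eq_of_mul_eq_one_right ha
  have he' : e⁻¹ = e := inv_eq_of_mul_eq_one_right he
  have ha₂ (x : G) : a * (a * x) = x := by rw [← mul_assoc, ha, one_mul]
  have he₂ (x : G) : e * (e * x) = x := by rw [← mul_assoc, he, one_mul]
  obtain rfl : d = e * a := by
    rw [eq_inv_of_mul_eq_one_right hd, mul_inv_rev, ha', he']
  simp [mul_assoc, ha', he', ha₂, he₂, ha, he]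

theorem ptSym_mul_self_eq_one {Q : Type*} [PaperQuandle Q] {u : Q}
    (hu : ∀ x : Q, x ▷ u ▷ u = x) :
    ptSym u * ptSym u = 1 :=
  Equiv.ext hu

theorem stmt_3
    {Q : Type*} [PaperQuandle Q] (a d e : Q)
    (rel_a : ∀ x : Q, x ▷ a ▷ a = x)
    (rel_e : ∀ x : Q, x ▷ e ▷ e = x)
    (rel_dea : ∀ x : Q, x ▷ d ▷ e ▷ a = x) :
    ∀ x : Q, x ▷ a = x ▷ d ▷ a ▷ d ∧ x ▷ a = x ▷⁻¹ d ▷ a ▷⁻¹ d ∧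
      x ▷ a = x ▷ d ▷ e ∧ x ▷ a = x ▷ e ▷⁻¹ d := by
  -- Words act on the right, so `x ▷ u ▷ v` is `(ptSym v * ptSym u) x`.
  obtain ⟨h₁, h₂, h₃, h₄⟩ := eq_conj_and_eq_mul_of_mul_mul_eq_one
    (ptSym_mul_self_eq_one rel_a) (ptSym_mul_self_eq_one rel_e)
    (d := ptSym d) (Equiv.ext rel_dea)
  exact fun x => ⟨congr($h₁ x), congr($h₂ x), congr($h₃ x), congr($h₄ x)⟩
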